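/- Let C_G := {x ∈ ℝ² : B(x,α₁) ≥ 0 and B(x,α₂) ≥ 0} (the G₂-dominant chamber) and C_H := {(x₁,x₂) ∈ ℝ² : x₁ ≥ 0 and x₂ ≥ 0} (the dominant chamber for the subsystem with roots ±2ε₁, ±2ε₂). Then the set of elements w of the Weyl group W with w(C_G) ⊆ C_H is exactly {1, s₁, s₂}. -/
import Mathlib


noncomputable section

/-- The bilinear form `B((x₁,x₂),(y₁,y₂)) = x₁y₁ + 3x₂y₂` on `ℝ²`. -/
def B (x y : ℝ × ℝ) : ℝ := x.1 * y.1 + 3 * x.2 * y.2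

/-- The short simple root of `G₂`. -/
def α₁ : ℝ × ℝ := (-1, 1)
/-- The long simple root of `G₂`. -/
def α₂ : ℝ × ℝ := (3, -1)

/-- The `B`-orthogonal reflection in `α`, as a linear map. -/
def reflLM (α : ℝ × ℝ) : (ℝ × ℝ) →ₗ[ℝ] (ℝ × ℝ) where
  toFun x := x - (2 * B x α / B α α) • α
  map_add' x y := by
    simp only [B, Prod.fst_add, Prod.snd_add, Prod.smul_mk, smul_eq_mul, Prod.mk_add_mk,
      Prod.ext_iff, Prod.fst_sub, Prod.snd_sub, Prod.smul_fst, Prod.smul_snd]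
    constructor <;> ring
  map_smul' c x := by
    simp only [B, Prod.smul_fst, Prod.smul_snd, smul_eq_mul, RingHom.id_apply,
      Prod.ext_iff, Prod.fst_sub, Prod.snd_sub]
    constructor <;> ring

/-- The `B`-orthogonal reflection in `α`, as a linear automorphism, given that the
reflection is involutive. -/
def reflLE (α : ℝ × ℝ) (h : (reflLM α).comp (reflLM α) = LinearMap.id) :
    (ℝ × ℝ) ≃ₗ[ℝ] (ℝ × ℝ) :=
  LinearEquiv.ofLinear (reflLM α) (reflLM α) h h

lemma invol₁ : (reflLM α₁).comp (reflLM α₁) = LinearMap.id := by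
  apply LinearMap.ext
  intro x
  simp only [LinearMap.comp_apply, LinearMap.id_apply, reflLM, LinearMap.coe_mk, AddHom.coe_mk,
    B, α₁, Prod.ext_iff, Prod.fst_sub, Prod.snd_sub, Prod.smul_fst, Prod.smul_snd, smul_eq_mul]
  norm_num
  constructor <;> ring

lemma invol₂ : (reflLM α₂).comp (reflLM α₂) = LinearMap.id := by
  apply LinearMap.ext
  intro x
  simp only [LinearMap.comp_apply, LinearMap.id_apply, reflLM, LinearMap.coe_mk, AddHom.coe_mk,
    B, α₂, Prod.ext_iff, Prod.fst_sub, Prod.snd_sub, Prod.smul_fst, Prod.smul_snd, smul_eq_mul]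
  norm_num
  constructor <;> ring

/-- The simple reflection `s₁ = s_{α₁}`. -/
def s₁ : (ℝ × ℝ) ≃ₗ[ℝ] (ℝ × ℝ) := reflLE α₁ invol₁

/-- The simple reflection `s₂ = s_{α₂}`. -/
def s₂ : (ℝ × ℝ) ≃ₗ[ℝ] (ℝ × ℝ) := reflLE α₂ invol₂

/-- The Weyl group of `G₂`, as the subgroup of linear automorphisms of `ℝ²`
generated by `s₁` and `s₂`. -/
def W : Subgroup ((ℝ × ℝ) ≃ₗ[ℝ] (ℝ × ℝ)) := Subgroup.closure {s₁, s₂}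

/-- The dominant chamber for `G₂`. -/
def CG : Set (ℝ × ℝ) := {x | 0 ≤ B x α₁ ∧ 0 ≤ B x α₂}

/-- The dominant chamber for the subsystem with roots `±2ε₁, ±2ε₂`. -/
def CH : Set (ℝ × ℝ) := {x | 0 ≤ x.1 ∧ 0 ≤ x.2}

-- auxiliary lemmas
lemma mulApply (e f : (ℝ × ℝ) ≃ₗ[ℝ] (ℝ × ℝ)) (x : ℝ × ℝ) : (e * f) x = e (f x) := rfl

lemma oneApply (x : ℝ × ℝ) : (1 : (ℝ × ℝ) ≃ₗ[ℝ] (ℝ × ℝ)) x = x := rfl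

lemma s₁_apply (x : ℝ × ℝ) : s₁ x = ((x.1 + 3 * x.2) / 2, (x.1 - x.2) / 2) := by
  show (reflLE α₁ invol₁) x = _
  simp only [reflLE, LinearEquiv.ofLinear_apply, reflLM, LinearMap.coe_mk, AddHom.coe_mk,
    B, α₁, Prod.ext_iff, Prod.fst_sub, Prod.snd_sub, Prod.smul_fst, Prod.smul_snd, smul_eq_mul]
  norm_num
  constructor <;> ring

lemma s₂_apply (x : ℝ × ℝ) : s₂ x = ((-x.1 + 3 * x.2) / 2, (x.1 + x.2) / 2) := by
  show (reflLE α₂ invol₂) x = _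
  simp only [reflLE, LinearEquiv.ofLinear_apply, reflLM, LinearMap.coe_mk, AddHom.coe_mk,
    B, α₂, Prod.ext_iff, Prod.fst_sub, Prod.snd_sub, Prod.smul_fst, Prod.smul_snd, smul_eq_mul]
  norm_num
  constructor <;> ring

lemma sq₁ : s₁ * s₁ = 1 := by
  refine LinearEquiv.ext fun x => ?_
  simp only [mulApply, oneApply, s₁_apply, Prod.ext_iff]
  constructor <;> ring

lemma sq₂ : s₂ * s₂ = 1 := by
  refine LinearEquiv.ext fun x => ?_
  simp only [mulApply, oneApply, s₂_apply, Prod.ext_iff]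
  constructor <;> ring

lemma braid : s₂ * s₁ * s₂ * s₁ * s₂ * s₁ = s₁ * s₂ * s₁ * s₂ * s₁ * s₂ := by
  refine LinearEquiv.ext fun x => ?_
  simp only [mulApply, s₁_apply, s₂_apply, Prod.ext_iff]
  constructor <;> ring

/-- The predicate listing the 12 elements of the Weyl group. -/
def P (w : (ℝ × ℝ) ≃ₗ[ℝ] (ℝ × ℝ)) : Prop :=
  w = 1 ∨ w = s₁ ∨ w = s₂ ∨ w = s₁ * s₂ ∨ w = s₂ * s₁ ∨ w = s₁ * s₂ * s₁ ∨
  w = s₂ * s₁ * s₂ ∨ w = s₁ * s₂ * s₁ * s₂ ∨ w = s₂ * s₁ * s₂ * s₁ ∨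
  w = s₁ * s₂ * s₁ * s₂ * s₁ ∨ w = s₂ * s₁ * s₂ * s₁ * s₂ ∨ w = s₁ * s₂ * s₁ * s₂ * s₁ * s₂

lemma P_mul_s₁ (w : (ℝ × ℝ) ≃ₗ[ℝ] (ℝ × ℝ)) (h : P w) : P (w * s₁) := by
  unfold P at h ⊢
  rcases h with rfl | rfl | rfl | rfl | rfl | rfl | rfl | rfl | rfl | rfl | rfl | rfl
  · exact Or.inr (Or.inl (one_mul s₁))
  · exact Or.inl (sq₁)
  · tauto
  · right; right; right; right; right; left; rw [mul_assoc]
  · right; right; left; rw [mul_assoc, sq₁, mul_one]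
  · right; right; right; left; rw [mul_assoc, sq₁, mul_one]
  · right; right; right; right; right; right; right; right; left; rw [mul_assoc]
  · right; right; right; right; right; right; right; right; right; left; rw [mul_assoc]
  · right; right; right; right; right; right; left; rw [mul_assoc, sq₁, mul_one]
  · right; right; right; right; right; right; right; left; rw [mul_assoc, sq₁, mul_one]
  · right; right; right; right; right; right; right; right; right; right; right
    exact braid
  · right; right; right; right; right; right; right; right; right; right; left
    rw [← braid, mul_assoc, sq₁, mul_one]

lemma P_mul_s₂ (w : (ℝ × ℝ) ≃ₗ[ℝ] (ℝ × ℝ)) (h : P w) : P (w * s₂) := by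
  unfold P at h ⊢
  rcases h with rfl | rfl | rfl | rfl | rfl | rfl | rfl | rfl | rfl | rfl | rfl | rfl
  · exact Or.inr (Or.inr (Or.inl (one_mul s₂)))
  · tauto
  · exact Or.inl (sq₂)
  · right; left; rw [mul_assoc, sq₂, mul_one]
  · right; right; right; right; right; right; left; rw [mul_assoc]
  · right; right; right; right; right; right; right; left; rw [mul_assoc]
  · right; right; right; right; left; rw [mul_assoc, sq₂, mul_one]
  · right; right; right; right; right; left; rw [mul_assoc, sq₂, mul_one]
  · right; right; right; right; right; right; right; right; right; right; left
    rw [mul_assoc]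
  · right; right; right; right; right; right; right; right; right; right; right
    rw [mul_assoc]
  · right; right; right; right; right; right; right; right; left
    rw [mul_assoc, sq₂, mul_one]
  · right; right; right; right; right; right; right; right; right; left
    rw [mul_assoc, sq₂, mul_one]

lemma mem_W_P {w : (ℝ × ℝ) ≃ₗ[ℝ] (ℝ × ℝ)} (hw : w ∈ W) : P w := by
  induction hw using Subgroup.closure_induction_right with
  | one => exact Or.inl rfl
  | mul_right x hx y hy ih =>
    rcases hy with rfl | rfl
    · exact P_mul_s₁ x ih
    · exact P_mul_s₂ x ih
  | mul_inv_cancel x hx y hy ih =>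
    rcases hy with rfl | rfl
    · rw [show s₁⁻¹ = s₁ from inv_eq_of_mul_eq_one_right sq₁]; exact P_mul_s₁ x ih
    · rw [show s₂⁻¹ = s₂ from inv_eq_of_mul_eq_one_right sq₂]; exact P_mul_s₂ x ih

lemma pt_mem_CG : ((2 : ℝ), (1 : ℝ)) ∈ CG := by
  simp only [CG, B, α₁, α₂, Set.mem_setOf_eq]
  norm_num

/-- The elements of the Weyl group taking the `G₂`-dominant chamber into the
`H`-dominant chamber are exactly `1`, `s₁` and `s₂`. -/

theorem stmt9 :
    {w : (ℝ × ℝ) ≃ₗ[ℝ] (ℝ × ℝ) | w ∈ W ∧ ∀ x ∈ CG, w x ∈ CH} = {1, s₁, s₂} := by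
  ext w
  simp only [Set.mem_setOf_eq, Set.mem_insert_iff, Set.mem_singleton_iff]
  constructor
  · rintro ⟨hW, hC⟩
    have hP := mem_W_P hW
    have key := hC ((2 : ℝ), (1 : ℝ)) pt_mem_CG
    rcases hP with rfl | rfl | rfl | rfl | rfl | rfl | rfl | rfl | rfl | rfl | rfl | rfl
    · tauto
    · tauto
    · tauto
    all_goals {
      exfalso
      simp only [CH, Set.mem_setOf_eq, mulApply, s₁_apply, s₂_apply] at key
      norm_num at key }
  · rintro (rfl | rfl | rfl)
    · exact ⟨one_mem W, fun x hx => by simpa [CH, oneApply] using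
        (by obtain ⟨h1, h2⟩ := hx; simp only [B, α₁, α₂] at h1 h2;
            exact ⟨by nlinarith, by nlinarith⟩ : (0:ℝ) ≤ x.1 ∧ (0:ℝ) ≤ x.2)⟩
    · refine ⟨Subgroup.subset_closure (by simp), fun x hx => ?_⟩
      obtain ⟨h1, h2⟩ := hx
      simp only [B, α₁, α₂] at h1 h2
      simp only [CH, Set.mem_setOf_eq, s₁_apply]
      constructor <;> [nlinarith; nlinarith]
    · refine ⟨Subgroup.subset_closure (by simp), fun x hx => ?_⟩
      obtain ⟨h1, h2⟩ := hx
      simp only [B, α₁, α₂] at h1 h2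
      simp only [CH, Set.mem_setOf_eq, s₂_apply]
      constructor <;> [nlinarith; nlinarith]
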